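/- arXiv:1503.05510 — 3 statements merged into one kernel-verified Lean document; each statement's English description precedes it below -/
import Mathlib

section
/- The map Ψ : (1,∞)³ → (1,∞)³ defined by Ψ(a,b,c) = (A,B,C), where A, B, C > 1 are determined by (A+1)/(A−1) = √((1+abc)(a+bc)/((b+ac)(c+ab))), (B+1)/(B−1) = √((1+abc)(b+ac)/((a+bc)(c+ab))), (C+1)/(C−1) = √((1+abc)(c+ab)/((a+bc)(b+ac))), is an involution: Ψ(Ψ(a,b,c)) = (a,b,c) for all a, b, c > 1. -/
/-- The ratio `R_A = (1+abc)(a+bc)/((b+ac)(c+ab))`. -/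
noncomputable def ratioA (a b c : ℝ) : ℝ :=
  (1 + a*b*c) * (a + b*c) / ((b + a*c) * (c + a*b))

/-- The unique `A > 1` with `(A+1)/(A−1) = √R_A`, namely `A = (√R_A + 1)/(√R_A − 1)`. -/
noncomputable def hexA (a b c : ℝ) : ℝ :=
  (Real.sqrt (ratioA a b c) + 1) / (Real.sqrt (ratioA a b c) - 1)

/-- The map `Ψ(a,b,c) = (A,B,C)` on triples, encoding the correspondence between the
two triples of alternate side-length exponentials of a right-angled hexagon. -/
noncomputable def Psi (p : ℝ × ℝ × ℝ) : ℝ × ℝ × ℝ :=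
  (hexA p.1 p.2.1 p.2.2, hexA p.2.1 p.1 p.2.2, hexA p.2.2 p.1 p.2.1)

lemma ratioA_symm (a b c : ℝ) : ratioA a b c = ratioA a c b := by
  unfold ratioA; ring

lemma hexA_symm (a b c : ℝ) : hexA a b c = hexA a c b := by
  unfold hexA; rw [ratioA_symm]

lemma one_lt_ratioA {a b c : ℝ} (ha : 1 < a) (hb : 1 < b) (hc : 1 < c) :
    1 < ratioA a b c := by
  have hac : (0:ℝ) < a*c := mul_pos (by linarith) (by linarith)
  have hab : (0:ℝ) < a*b := mul_pos (by linarith) (by linarith)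
  have hden : 0 < (b + a*c) * (c + a*b) := mul_pos (by linarith) (by linarith)
  rw [ratioA, lt_div_iff₀ hden]
  nlinarith [mul_pos (mul_pos (show (0:ℝ) < a by linarith)
    (show (0:ℝ) < b^2 - 1 by nlinarith)) (show (0:ℝ) < c^2 - 1 by nlinarith)]

lemma one_lt_sqrt_ratioA {a b c : ℝ} (ha : 1 < a) (hb : 1 < b) (hc : 1 < c) :
    1 < Real.sqrt (ratioA a b c) := by
  have h := one_lt_ratioA ha hb hc
  have := Real.sqrt_lt_sqrt zero_le_one h
  simpa using this

lemma invol {x : ℝ} (hx : 1 < x) : ((x+1)/(x-1)+1)/((x+1)/(x-1)-1) = x := by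
  have h1 : x - 1 ≠ 0 := sub_ne_zero.mpr (by linarith)
  have e1 : (x+1)/(x-1)+1 = 2*x/(x-1) := by field_simp; ring
  have e2 : (x+1)/(x-1)-1 = 2/(x-1) := by field_simp; ring
  rw [e1, e2]
  field_simp

set_option maxHeartbeats 2000000 in
lemma psi_invol {a b c : ℝ} (ha : 1 < a) (hb : 1 < b) (hc : 1 < c) :
    hexA (hexA a b c) (hexA b a c) (hexA c a b) = a := by
  have hab : (1:ℝ) < a*b := by nlinarith
  have hbc : (1:ℝ) < b*c := by nlinarith
  have hac : (1:ℝ) < a*c := by nlinarith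
  have habc : (1:ℝ) < a*b*c := by nlinarith
  have hN : (0:ℝ) < 1 + a*b*c := by linarith
  have hPa : (0:ℝ) < a + b*c := by linarith
  have hPb : (0:ℝ) < b + a*c := by linarith
  have hPc : (0:ℝ) < c + a*b := by linarith
  set x := Real.sqrt (ratioA a b c) with hxdef
  set y := Real.sqrt (ratioA b a c) with hydef
  set z := Real.sqrt (ratioA c a b) with hzdef
  have hx1 : 1 < x := one_lt_sqrt_ratioA ha hb hc
  have hy1 : 1 < y := one_lt_sqrt_ratioA hb ha hc
  have hz1 : 1 < z := one_lt_sqrt_ratioA hc ha hb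
  have hx0 : x - 1 ≠ 0 := sub_ne_zero.mpr (by linarith)
  have hy0 : y - 1 ≠ 0 := sub_ne_zero.mpr (by linarith)
  have hz0 : z - 1 ≠ 0 := sub_ne_zero.mpr (by linarith)
  have hx2 : x^2 = (1 + a*b*c) * (a + b*c) / ((b + a*c) * (c + a*b)) := by
    rw [hxdef, Real.sq_sqrt (le_of_lt (lt_trans one_pos (one_lt_ratioA ha hb hc)))]; rfl
  have hy2 : y^2 = (1 + a*b*c) * (b + a*c) / ((a + b*c) * (c + a*b)) := by
    rw [hydef, Real.sq_sqrt (le_of_lt (lt_trans one_pos (one_lt_ratioA hb ha hc)))]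
    unfold ratioA; ring_nf
  have hz2 : z^2 = (1 + a*b*c) * (c + a*b) / ((a + b*c) * (b + a*c)) := by
    rw [hzdef, Real.sq_sqrt (le_of_lt (lt_trans one_pos (one_lt_ratioA hc ha hb)))]
    unfold ratioA; ring_nf
  have hyz : y * z = (1 + a*b*c) / (a + b*c) := by
    rw [hydef, hzdef, ← Real.sqrt_mul (le_of_lt (lt_trans one_pos (one_lt_ratioA hb ha hc))),
      show ratioA b a c * ratioA c a b = ((1 + a*b*c) / (a + b*c))^2 by
        unfold ratioA; field_simp]
    exact Real.sqrt_sq (le_of_lt (div_pos hN hPa))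
  -- abbreviations
  have hA : hexA a b c = (x+1)/(x-1) := rfl
  have hB : hexA b a c = (y+1)/(y-1) := rfl
  have hC : hexA c a b = (z+1)/(z-1) := rfl
  rw [hA, hB, hC]
  have hA1 : 1 < (x+1)/(x-1) := (one_lt_div (by linarith)).mpr (by linarith)
  have hB1 : 1 < (y+1)/(y-1) := (one_lt_div (by linarith)).mpr (by linarith)
  have hC1 : 1 < (z+1)/(z-1) := (one_lt_div (by linarith)).mpr (by linarith)
  -- value of numerator and denominator products
  have hF : (0:ℝ) < (1+b)*(1+c)*(b-1)*(c-1) :=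
    mul_pos (mul_pos (mul_pos (by linarith) (by linarith)) (by linarith)) (by linarith)
  have hP : (0:ℝ) < (a + b*c) * ((b + a*c) * (c + a*b)) := mul_pos hPa (mul_pos hPb hPc)
  have hx2' : x^2 * ((b + a*c) * (c + a*b)) = (1 + a*b*c) * (a + b*c) := by
    rw [hx2, div_mul_cancel₀ _ (ne_of_gt (mul_pos hPb hPc))]
  have hy2' : y^2 * ((a + b*c) * (c + a*b)) = (1 + a*b*c) * (b + a*c) := by
    rw [hy2, div_mul_cancel₀ _ (ne_of_gt (mul_pos hPa hPc))]
  have hz2' : z^2 * ((a + b*c) * (b + a*c)) = (1 + a*b*c) * (c + a*b) := by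
    rw [hz2, div_mul_cancel₀ _ (ne_of_gt (mul_pos hPa hPb))]
  have hyz' : y * z * (a + b*c) = 1 + a*b*c := by
    rw [hyz, div_mul_cancel₀ _ (ne_of_gt hPa)]
  have hn : (x*y*z + x + y + z) * (x*y*z + x - y - z) =
      (1 + a*b*c) * (1+a)^2 * ((1+b)*(1+c)*(b-1)*(c-1)) / ((a + b*c) * ((b + a*c) * (c + a*b))) := by
    rw [eq_div_iff (ne_of_gt hP)]
    linear_combination ((y*z)^2*(a+b*c) + 2*(y*z)*(a+b*c) + (a+b*c)) * hx2'
      - (b+a*c) * hy2' - (c+a*b) * hz2'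
      + (2*(1+a*b*c)^2 + (1+a*b*c)*(y*z*(a+b*c) - (1+a*b*c))
          + 2*(1+a*b*c)*(a+b*c) - 2*(b+a*c)*(c+a*b)) * hyz'
  have hd : (x*y*z + y - x - z) * (x*y*z + z - x - y) =
      (1 + a*b*c) * (a-1)^2 * ((1+b)*(1+c)*(b-1)*(c-1)) / ((a + b*c) * ((b + a*c) * (c + a*b))) := by
    rw [eq_div_iff (ne_of_gt hP)]
    linear_combination ((y*z)^2*(a+b*c) - 2*(y*z)*(a+b*c) + (a+b*c)) * hx2'
      - (b+a*c) * hy2' - (c+a*b) * hz2'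
      + (2*(1+a*b*c)^2 + (1+a*b*c)*(y*z*(a+b*c) - (1+a*b*c))
          - 2*(1+a*b*c)*(a+b*c) + 2*(b+a*c)*(c+a*b)) * hyz'
  have hvd : (0:ℝ) < (1 + a*b*c) * (a-1)^2 * ((1+b)*(1+c)*(b-1)*(c-1)) :=
    mul_pos (mul_pos hN (pow_pos (by linarith) 2)) hF
  have hn34 : (x*y*z + y - x - z) * (x*y*z + z - x - y) ≠ 0 := by
    rw [hd]; exact ne_of_gt (div_pos hvd hP)
  have hden : ((y+1)/(y-1) + (x+1)/(x-1) * ((z+1)/(z-1))) * ((z+1)/(z-1) + (x+1)/(x-1) * ((y+1)/(y-1))) ≠ 0 := by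
    have h1 : (0:ℝ) < (y+1)/(y-1) + (x+1)/(x-1) * ((z+1)/(z-1)) := by nlinarith
    have h2 : (0:ℝ) < (z+1)/(z-1) + (x+1)/(x-1) * ((y+1)/(y-1)) := by nlinarith
    exact ne_of_gt (mul_pos h1 h2)
  have hDne : (x-1)*(y-1)*(z-1) ≠ 0 := mul_ne_zero (mul_ne_zero hx0 hy0) hz0
  have e1 : 1 + (x+1)/(x-1) * ((y+1)/(y-1)) * ((z+1)/(z-1)) =
      2*(x*y*z + x + y + z)/((x-1)*(y-1)*(z-1)) := by
    field_simp; ring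
  have e2 : (x+1)/(x-1) + (y+1)/(y-1) * ((z+1)/(z-1)) =
      2*(x*y*z + x - y - z)/((x-1)*(y-1)*(z-1)) := by
    field_simp; ring
  have e3 : (y+1)/(y-1) + (x+1)/(x-1) * ((z+1)/(z-1)) =
      2*(x*y*z + y - x - z)/((x-1)*(y-1)*(z-1)) := by
    field_simp; ring
  have e4 : (z+1)/(z-1) + (x+1)/(x-1) * ((y+1)/(y-1)) =
      2*(x*y*z + z - x - y)/((x-1)*(y-1)*(z-1)) := by
    field_simp; ring
  have generic : ∀ p q r s D : ℝ, D ≠ 0 → r ≠ 0 → s ≠ 0 →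
      (2*p/D)*(2*q/D)/((2*r/D)*(2*s/D)) = p*q/(r*s) := by
    intro p q r s D hD hr hs
    field_simp
  have hn3 : x*y*z + y - x - z ≠ 0 := fun h => hn34 (by rw [h]; ring)
  have hn4 : x*y*z + z - x - y ≠ 0 := fun h => hn34 (by rw [h]; ring)
  have hABC : ratioA ((x+1)/(x-1)) ((y+1)/(y-1)) ((z+1)/(z-1)) =
      ((x*y*z + x + y + z) * (x*y*z + x - y - z)) / ((x*y*z + y - x - z) * (x*y*z + z - x - y)) := by
    unfold ratioA
    rw [e1, e2, e3, e4]
    exact generic _ _ _ _ _ hDne hn3 hn4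
  have key : ratioA ((x+1)/(x-1)) ((y+1)/(y-1)) ((z+1)/(z-1)) = ((a+1)/(a-1))^2 := by
    rw [hABC, hn, hd]
    have h1 := ne_of_gt hP
    have h2 := ne_of_gt hvd
    have h3 : a - 1 ≠ 0 := sub_ne_zero.mpr (by linarith)
    rw [div_div_div_eq, div_pow]
    rw [div_eq_div_iff (by positivity) (by positivity)]
    ring
  show (Real.sqrt (ratioA ((x+1)/(x-1)) ((y+1)/(y-1)) ((z+1)/(z-1))) + 1) /
      (Real.sqrt (ratioA ((x+1)/(x-1)) ((y+1)/(y-1)) ((z+1)/(z-1))) - 1) = a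
  rw [key, Real.sqrt_sq (le_of_lt (div_pos (by linarith) (by linarith)))]
  exact invol ha

lemma one_lt_hexA {a b c : ℝ} (ha : 1 < a) (hb : 1 < b) (hc : 1 < c) : 1 < hexA a b c := by
  have hx := one_lt_sqrt_ratioA ha hb hc
  unfold hexA
  rw [lt_div_iff₀ (by linarith)]
  linarith

lemma hex_eq {a b c : ℝ} (ha : 1 < a) (hb : 1 < b) (hc : 1 < c) :
    (hexA a b c + 1) / (hexA a b c - 1) = Real.sqrt (ratioA a b c) := by
  unfold hexA
  exact invol (one_lt_sqrt_ratioA ha hb hc)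

/-- `Ψ` maps `(1,∞)³` to `(1,∞)³`, the components `(A,B,C)` of
`Ψ(a,b,c)` satisfy the three defining equations, and `Ψ` is an involution. -/
theorem stmt1 (a b c : ℝ) (ha : 1 < a) (hb : 1 < b) (hc : 1 < c) :
    (1 < (Psi (a, b, c)).1 ∧ 1 < (Psi (a, b, c)).2.1 ∧ 1 < (Psi (a, b, c)).2.2) ∧
    ((Psi (a, b, c)).1 + 1) / ((Psi (a, b, c)).1 - 1) =
      Real.sqrt ((1 + a*b*c) * (a + b*c) / ((b + a*c) * (c + a*b))) ∧
    ((Psi (a, b, c)).2.1 + 1) / ((Psi (a, b, c)).2.1 - 1) =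
      Real.sqrt ((1 + a*b*c) * (b + a*c) / ((a + b*c) * (c + a*b))) ∧
    ((Psi (a, b, c)).2.2 + 1) / ((Psi (a, b, c)).2.2 - 1) =
      Real.sqrt ((1 + a*b*c) * (c + a*b) / ((a + b*c) * (b + a*c))) ∧
    Psi (Psi (a, b, c)) = (a, b, c) := by
  refine ⟨⟨?_, ?_, ?_⟩, ?_, ?_, ?_, ?_⟩
  · exact one_lt_hexA ha hb hc
  · exact one_lt_hexA hb ha hc
  · exact one_lt_hexA hc ha hb
  · exact hex_eq ha hb hc
  · show (hexA b a c + 1) / (hexA b a c - 1) = _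
    rw [show (1 + a*b*c) * (b + a*c) / ((a + b*c) * (c + a*b)) = ratioA b a c from by
      unfold ratioA; ring]
    exact hex_eq hb ha hc
  · show (hexA c a b + 1) / (hexA c a b - 1) = _
    rw [show (1 + a*b*c) * (c + a*b) / ((a + b*c) * (b + a*c)) = ratioA c a b from by
      unfold ratioA; ring]
    exact hex_eq hc ha hb
  · have h1 : hexA (hexA a b c) (hexA b a c) (hexA c a b) = a := psi_invol ha hb hc
    have h2 : hexA (hexA b a c) (hexA a b c) (hexA c a b) = b := by
      have h := psi_invol hb ha hc
      rwa [hexA_symm c b a] at h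
    have h3 : hexA (hexA c a b) (hexA a b c) (hexA b a c) = c := by
      have h := psi_invol hc ha hb
      rwa [hexA_symm a c b, hexA_symm b c a] at h
    show (hexA (hexA a b c) (hexA b a c) (hexA c a b),
          hexA (hexA b a c) (hexA a b c) (hexA c a b),
          hexA (hexA c a b) (hexA a b c) (hexA b a c)) = (a, b, c)
    rw [h1, h2, h3]
end

section
/- If a, b, c > 1 are real numbers satisfying 1 − a − b − c − ab − ac − bc + abc = 0, then Ψ(a,b,c) = (a,b,c); that is, (a+1)²(b+ac)(c+ab) = (a−1)²(1+abc)(a+bc), and the two analogous identities obtained by cyclically permuting (a,b,c) also hold. In other words, the 'trigonometric' right-angled hexagons, for which opposite sides have equal lengths, are exactly fixed by the alternate-sides correspondence. -/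
lemma hex_key (a b c : ℝ) (ha : 1 < a) (hb : 1 < b) (hc : 1 < c)
    (htrig : 1 - a - b - c - a*b - a*c - b*c + a*b*c = 0) :
    hexA a b c = a ∧
    (a + 1)^2 * (b + a*c) * (c + a*b) = (a - 1)^2 * (1 + a*b*c) * (a + b*c) := by
  have ha0 : (0:ℝ) < a := by linarith
  have hb0 : (0:ℝ) < b := by linarith
  have hc0 : (0:ℝ) < c := by linarith
  have hident : (a + 1)^2 * (b + a*c) * (c + a*b)
      = (a - 1)^2 * (1 + a*b*c) * (a + b*c) := by
    linear_combination (a^2 - a - a^2*b - a*b - a^2*c - a*c + a*b*c - a^2*b*c) * htrig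
  refine ⟨?_, hident⟩
  have hd1 : (0:ℝ) < b + a*c := by positivity
  have hd2 : (0:ℝ) < c + a*b := by positivity
  have ham : (0:ℝ) < a - 1 := by linarith
  have hratio : ratioA a b c = ((a+1)/(a-1))^2 := by
    unfold ratioA
    rw [div_pow, div_eq_div_iff (by positivity) (by positivity)]
    linear_combination -hident
  have hsqrt : Real.sqrt (ratioA a b c) = (a+1)/(a-1) := by
    rw [hratio, Real.sqrt_sq (by positivity)]
  have hgt : 1 < (a+1)/(a-1) := (one_lt_div ham).mpr (by linarith)
  have hne : (a+1)/(a-1) - 1 ≠ 0 := sub_ne_zero.mpr hgt.ne'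
  unfold hexA
  rw [hsqrt]
  field_simp
  ring

/-- if `a, b, c > 1` satisfy the trigonometric relation
`1 − a − b − c − ab − ac − bc + abc = 0`, then `Ψ(a,b,c) = (a,b,c)`; that is,
`(a+1)²(b+ac)(c+ab) = (a−1)²(1+abc)(a+bc)` and its two cyclic analogues hold. -/
theorem stmt3 (a b c : ℝ) (ha : 1 < a) (hb : 1 < b) (hc : 1 < c)
    (htrig : 1 - a - b - c - a*b - a*c - b*c + a*b*c = 0) :
    Psi (a, b, c) = (a, b, c) ∧
    (a + 1)^2 * (b + a*c) * (c + a*b) = (a - 1)^2 * (1 + a*b*c) * (a + b*c) ∧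
    (b + 1)^2 * (c + b*a) * (a + b*c) = (b - 1)^2 * (1 + a*b*c) * (b + c*a) ∧
    (c + 1)^2 * (a + c*b) * (b + c*a) = (c - 1)^2 * (1 + a*b*c) * (c + a*b) := by
  have hid := hex_key a b c ha hb hc htrig
  have htrigb : 1 - b - a - c - b*a - b*c - a*c + b*a*c = 0 := by linarith [htrig]; 
  have htrigc : 1 - c - a - b - c*a - c*b - a*b + c*a*b = 0 := by nlinarith [htrig, sq_nonneg a]
  have hidb := hex_key b a c hb ha hc (by linear_combination htrig)
  have hidc := hex_key c a b hc ha hb (by linear_combination htrig)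
  refine ⟨?_, ?_, ?_, ?_⟩
  · show (hexA a b c, hexA b a c, hexA c a b) = (a, b, c)
    rw [hid.1, hidb.1, hidc.1]
  · exact hid.2
  · linear_combination hidb.2
  · linear_combination hidc.2
end

section
/- Let D = {(ℓ₁, ℓ₂) ∈ (0,∞)² : sinh ℓ₁ sinh ℓ₂ > 1} and let τ be the measure on D with density C/√(sinh²ℓ₁ sinh²ℓ₂ − 1) dℓ₁ dℓ₂. Define T : D → D by T(ℓ₁, ℓ₂) = (ℓ₂, ℓ₃), where ℓ₃ > 0 is determined by sinh ℓ₃ = cosh ℓ₁ / √(sinh²ℓ₁ sinh²ℓ₂ − 1). Then T maps D into D (since sinh ℓ₂ sinh ℓ₃ = cosh ℓ₅ > 1) and the pushforward of τ under T equals τ; that is, τ is invariant under the cyclic rotation of the pentagon's sides. -/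
/-
`T` is a bijection of `D`: reading the pentagon backwards, `ℓ₁` is recovered from `(ℓ₃, ℓ₂)`
by the same formula that gives `ℓ₃` from `(ℓ₁, ℓ₂)`, so `T⁻¹ = swap ∘ T ∘ swap`. Since
`T(ℓ₁, ℓ₂) = (ℓ₂, ℓ₃)`, its Jacobian is `-∂ℓ₃/∂ℓ₁ = cosh ℓ₂ / sinh² ℓ₄`, while
`sinh ℓ₂ sinh ℓ₃ = cosh ℓ₅` gives `√(sinh² ℓ₂ sinh² ℓ₃ - 1) = sinh ℓ₅ = cosh ℓ₂ / sinh ℓ₄`.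
Hence the Jacobian times the density at `T p` is the density `C / sinh ℓ₄` at `p`, and the
change of variables formula gives the invariance.
-/

open MeasureTheory

/-- The parameter domain `D = {(ℓ₁,ℓ₂) ∈ (0,∞)² : sinh ℓ₁ sinh ℓ₂ > 1}`. -/
def pentDom : Set (ℝ × ℝ) :=
  {p | 0 < p.1 ∧ 0 < p.2 ∧ 1 < Real.sinh p.1 * Real.sinh p.2}

/-- The measure `τ` on `D` with density `C/√(sinh²ℓ₁ sinh²ℓ₂ − 1) dℓ₁ dℓ₂`. -/
noncomputable def pentMeasure (C : ℝ) : Measure (ℝ × ℝ) :=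
  (volume.restrict pentDom).withDensity
    (fun p => ENNReal.ofReal
      (C / Real.sqrt (Real.sinh p.1 ^ 2 * Real.sinh p.2 ^ 2 - 1)))

/-- The rotation `T(ℓ₁,ℓ₂) = (ℓ₂,ℓ₃)` re-parametrizing the pentagon by the next pair
of consecutive sides, where `sinh ℓ₃ = cosh ℓ₁/√(sinh²ℓ₁ sinh²ℓ₂ − 1)`. -/
noncomputable def pentRot (p : ℝ × ℝ) : ℝ × ℝ :=
  (p.2, Real.arsinh
    (Real.cosh p.1 / Real.sqrt (Real.sinh p.1 ^ 2 * Real.sinh p.2 ^ 2 - 1)))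

open Real Set

theorem map_restrict_withDensity_eq_self {E : Type*} [NormedAddCommGroup E] [NormedSpace ℝ E]
    [FiniteDimensional ℝ E] [MeasurableSpace E] [BorelSpace E] (μ : Measure E)
    [μ.IsAddHaarMeasure] {s : Set E} {f : E → E} {f' : E → E →L[ℝ] E} {ρ : E → ENNReal}
    (hs : MeasurableSet s) (hf : Measurable f) (hbij : BijOn f s s)
    (hf' : ∀ x ∈ s, HasFDerivWithinAt f (f' x) s x)
    (hρ : ∀ x ∈ s, ENNReal.ofReal |(f' x).det| * ρ (f x) = ρ x) :
    Measure.map f ((μ.restrict s).withDensity ρ) = (μ.restrict s).withDensity ρ := by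
  ext A hA
  have hs' : MeasurableSet (f ⁻¹' A ∩ s) := (hf hA).inter hs
  rw [Measure.map_apply hf hA, withDensity_apply _ (hf hA), withDensity_apply _ hA,
    Measure.restrict_restrict (hf hA), Measure.restrict_restrict hA,
    show A ∩ s = f '' (f ⁻¹' A ∩ s) by rw [image_preimage_inter, hbij.image_eq],
    lintegral_image_eq_lintegral_abs_det_fderiv_mul μ hs'
      (fun x hx => (hf' x hx.2).mono inter_subset_right) (hbij.injOn.mono inter_subset_right)]
  exact setLIntegral_congr_fun hs' fun x hx => (hρ x hx.2).symm

lemma det_snd_prod (M : ℝ × ℝ →L[ℝ] ℝ) :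
    ((ContinuousLinearMap.snd ℝ ℝ ℝ).prod M).det = -M (1, 0) := by
  rw [ContinuousLinearMap.det, ← LinearMap.det_toMatrix (Module.Basis.finTwoProd ℝ),
    Matrix.det_fin_two]
  simp [LinearMap.toMatrix_apply]

noncomputable def pentSide (a b : ℝ) : ℝ := arsinh (cosh a / √(sinh a ^ 2 * sinh b ^ 2 - 1))

lemma pentRot_eq (p : ℝ × ℝ) : pentRot p = (p.2, pentSide p.1 p.2) := rfl

section
variable {a b : ℝ}

lemma one_lt_sinh_sq_mul_sinh_sq (h : 1 < sinh a * sinh b) : 1 < sinh a ^ 2 * sinh b ^ 2 := by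
  nlinarith

lemma sinh_pentSide (a b : ℝ) : sinh (pentSide a b) = cosh a / √(sinh a ^ 2 * sinh b ^ 2 - 1) :=
  sinh_arsinh _

lemma pentSide_pos (h : 1 < sinh a ^ 2 * sinh b ^ 2) : 0 < pentSide a b :=
  arsinh_pos_iff.2 (div_pos (cosh_pos a) (sqrt_pos.2 (by linarith)))

lemma cosh_pentSide (ha : 0 ≤ a) (h : 1 < sinh a ^ 2 * sinh b ^ 2) :
    cosh (pentSide a b) = sinh a * cosh b / √(sinh a ^ 2 * sinh b ^ 2 - 1) := by
  have hW := sqrt_pos.2 (sub_pos.2 h)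
  have hW2 := sq_sqrt (sub_pos.2 h).le
  have hsa : 0 ≤ sinh a := sinh_nonneg_iff.2 ha
  rw [pentSide, cosh_arsinh, sqrt_eq_iff_eq_sq (by positivity) (by positivity)]
  field_simp
  linear_combination cosh_sq a - sinh a ^ 2 * cosh_sq b + hW2

lemma sqrt_sinh_sq_mul_sinh_pentSide_sq (h : 1 < sinh a ^ 2 * sinh b ^ 2) :
    √(sinh b ^ 2 * sinh (pentSide a b) ^ 2 - 1) = cosh b / √(sinh a ^ 2 * sinh b ^ 2 - 1) := by
  have hW := sqrt_pos.2 (sub_pos.2 h)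
  have hW2 := sq_sqrt (sub_pos.2 h).le
  rw [sqrt_eq_iff_mul_self_eq_of_pos (by positivity), sinh_pentSide]
  field_simp
  linear_combination -sinh b ^ 2 * cosh_sq a + cosh_sq b + hW2

lemma one_lt_sinh_mul_sinh_pentSide (hb : 0 < b) (h : 1 < sinh a ^ 2 * sinh b ^ 2) :
    1 < sinh b * sinh (pentSide a b) := by
  have hpos : 0 < sinh b * sinh (pentSide a b) :=
    mul_pos (sinh_pos_iff.2 hb) (sinh_pos_iff.2 (pentSide_pos h))
  have hsq : 0 < sinh b ^ 2 * sinh (pentSide a b) ^ 2 - 1 := by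
    rw [← sqrt_pos, sqrt_sinh_sq_mul_sinh_pentSide_sq h]
    exact div_pos (cosh_pos b) (sqrt_pos.2 (sub_pos.2 h))
  nlinarith

-- Reading the pentagon in the opposite direction.
lemma pentSide_pentSide (ha : 0 ≤ a) (h : 1 < sinh a ^ 2 * sinh b ^ 2) :
    pentSide (pentSide a b) b = a := by
  have hW := sqrt_pos.2 (sub_pos.2 h)
  have hsinh : cosh (pentSide a b) / √(sinh (pentSide a b) ^ 2 * sinh b ^ 2 - 1) = sinh a := by
    rw [mul_comm, sqrt_sinh_sq_mul_sinh_pentSide_sq h, cosh_pentSide ha h]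
    field_simp [(cosh_pos b).ne']
  rw [pentSide, hsinh, arsinh_sinh]

lemma hasDerivAt_pentSide_fst (ha : 0 < a) (h : 1 < sinh a ^ 2 * sinh b ^ 2) :
    HasDerivAt (pentSide · b) (-(cosh b / (sinh a ^ 2 * sinh b ^ 2 - 1))) a := by
  have hq : 0 < sinh a ^ 2 * sinh b ^ 2 - 1 := sub_pos.2 h
  have hW := sqrt_pos.2 hq
  have hW2 := sq_sqrt hq.le
  have hsqrt : HasDerivAt (fun x => √(sinh x ^ 2 * sinh b ^ 2 - 1))
      (2 * sinh a * cosh a * sinh b ^ 2 / (2 * √(sinh a ^ 2 * sinh b ^ 2 - 1))) a := by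
    refine HasDerivAt.sqrt ?_ hq.ne'
    refine ((((hasDerivAt_sinh a).pow 2).mul_const (sinh b ^ 2)).sub_const 1).congr_deriv ?_
    ring
  have hquot : HasDerivAt (fun x => cosh x / √(sinh x ^ 2 * sinh b ^ 2 - 1))
      (-(sinh a * cosh b ^ 2) / √(sinh a ^ 2 * sinh b ^ 2 - 1) ^ 3) a := by
    refine ((hasDerivAt_cosh a).div hsqrt hW.ne').congr_deriv ?_
    field_simp
    linear_combination hW2 - sinh b ^ 2 * cosh_sq a + cosh_sq b
  have hcosh : √(1 + (cosh a / √(sinh a ^ 2 * sinh b ^ 2 - 1)) ^ 2)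
      = sinh a * cosh b / √(sinh a ^ 2 * sinh b ^ 2 - 1) := by
    rw [← cosh_arsinh]
    exact cosh_pentSide ha.le h
  refine hquot.arsinh.congr_deriv ?_
  rw [hcosh, smul_eq_mul]
  field_simp [(sinh_pos_iff.2 ha).ne', (cosh_pos b).ne']
  linear_combination hW2

end

lemma bijOn_pentRot : BijOn pentRot pentDom pentDom := by
  have hmaps : MapsTo pentRot pentDom pentDom := fun _ ⟨_, hb, hab⟩ =>
    ⟨hb, pentSide_pos (one_lt_sinh_sq_mul_sinh_sq hab),
      one_lt_sinh_mul_sinh_pentSide hb (one_lt_sinh_sq_mul_sinh_sq hab)⟩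
  refine ⟨hmaps, ?_, ?_⟩
  · rintro ⟨a, b⟩ ⟨ha : 0 < a, -, hab : 1 < sinh a * sinh b⟩
      ⟨a', b'⟩ ⟨ha' : 0 < a', -, hab' : 1 < sinh a' * sinh b'⟩ heq
    obtain ⟨rfl, hside⟩ : b = b' ∧ pentSide a b = pentSide a' b' := Prod.ext_iff.1 heq
    have : a = a' := by
      rw [← pentSide_pentSide ha.le (one_lt_sinh_sq_mul_sinh_sq hab), hside,
        pentSide_pentSide ha'.le (one_lt_sinh_sq_mul_sinh_sq hab')]
    rw [this]
  · rintro ⟨a, b⟩ ⟨ha, hb, hab⟩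
    have hba : 1 < sinh b * sinh a := by rwa [mul_comm]
    obtain ⟨-, hpos, hprod⟩ := hmaps (show (b, a) ∈ pentDom from ⟨hb, ha, hba⟩)
    refine ⟨(pentSide b a, a), ⟨hpos, ha, by rwa [mul_comm]⟩, ?_⟩
    rw [pentRot_eq, pentSide_pentSide hb.le (one_lt_sinh_sq_mul_sinh_sq hba)]

section
variable {p : ℝ × ℝ}

lemma differentiableAt_pentSide (h : 1 < sinh p.1 ^ 2 * sinh p.2 ^ 2) :
    DifferentiableAt ℝ (fun q : ℝ × ℝ => pentSide q.1 q.2) p := by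
  have hq : sinh p.1 ^ 2 * sinh p.2 ^ 2 - 1 ≠ 0 := (sub_pos.2 h).ne'
  have hW : √(sinh p.1 ^ 2 * sinh p.2 ^ 2 - 1) ≠ 0 := (sqrt_pos.2 (sub_pos.2 h)).ne'
  unfold pentSide
  fun_prop (disch := assumption)

lemma hasFDerivAt_pentRot (h : 1 < sinh p.1 ^ 2 * sinh p.2 ^ 2) :
    HasFDerivAt pentRot
      ((ContinuousLinearMap.snd ℝ ℝ ℝ).prod (fderiv ℝ (fun q : ℝ × ℝ => pentSide q.1 q.2) p)) p :=
  hasFDerivAt_snd.prodMk (differentiableAt_pentSide h).hasFDerivAt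

lemma det_fderiv_pentRot (h₁ : 0 < p.1) (h : 1 < sinh p.1 ^ 2 * sinh p.2 ^ 2) :
    (fderiv ℝ pentRot p).det = cosh p.2 / (sinh p.1 ^ 2 * sinh p.2 ^ 2 - 1) := by
  have hpartial := (differentiableAt_pentSide h).hasFDerivAt.comp_hasDerivAt p.1
    ((hasDerivAt_id p.1).prodMk (hasDerivAt_const p.1 p.2))
  rw [(hasFDerivAt_pentRot h).fderiv, det_snd_prod,
    hpartial.unique (hasDerivAt_pentSide_fst h₁ h), neg_neg]

lemma ofReal_abs_det_fderiv_pentRot_mul (C : ℝ) (hp : p ∈ pentDom) :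
    ENNReal.ofReal |(fderiv ℝ pentRot p).det| *
        ENNReal.ofReal (C / √(sinh (pentRot p).1 ^ 2 * sinh (pentRot p).2 ^ 2 - 1)) =
      ENNReal.ofReal (C / √(sinh p.1 ^ 2 * sinh p.2 ^ 2 - 1)) := by
  obtain ⟨h₁, -, h₁₂⟩ := hp
  have h := one_lt_sinh_sq_mul_sinh_sq h₁₂
  have hq := sub_pos.2 h
  have hdet := div_pos (cosh_pos p.2) hq
  rw [det_fderiv_pentRot h₁ h, abs_of_pos hdet, ← ENNReal.ofReal_mul hdet.le, pentRot_eq,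
    sqrt_sinh_sq_mul_sinh_pentSide_sq h]
  congr 1
  field_simp [(cosh_pos p.2).ne', (sqrt_pos.2 hq).ne']
  linear_combination C * sq_sqrt hq.le

end

lemma measurable_pentRot : Measurable pentRot :=
  measurable_snd.prodMk (continuous_arsinh.measurable.comp (by fun_prop))

lemma measurableSet_pentDom : MeasurableSet pentDom := by
  unfold pentDom
  measurability

theorem stmt13_general (C : ℝ) :
    (∀ p ∈ pentDom, pentRot p ∈ pentDom) ∧
    Measure.map pentRot (pentMeasure C) = pentMeasure C :=
  ⟨bijOn_pentRot.mapsTo, map_restrict_withDensity_eq_self volume measurableSet_pentDom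
    measurable_pentRot bijOn_pentRot
    (fun _ ⟨_, _, h⟩ => (hasFDerivAt_pentRot
      (one_lt_sinh_sq_mul_sinh_sq h)).differentiableAt.hasFDerivAt.hasFDerivWithinAt)
    (fun _ => ofReal_abs_det_fderiv_pentRot_mul C)⟩

/-- `T` maps `D` into `D` and the pushforward of `τ` under `T` equals
`τ`: the measure `τ` is invariant under the cyclic rotation of the pentagon's sides. -/
theorem stmt13 (C : ℝ) (hC : 0 < C) :
    (∀ p ∈ pentDom, pentRot p ∈ pentDom) ∧
    Measure.map pentRot (pentMeasure C) = pentMeasure C :=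
  stmt13_general C
end
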